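/- arXiv:2602.16301 — 2 statements merged into one kernel-verified Lean document; each statement's English description precedes it below -/
import Mathlib

section
/- Let A be a finite set, β > 0, Q : A → ℝ, and π a probability distribution on A satisfying π(a) ∝ π(a)·exp(β Q(a)) (i.e., π(a)·Z = π(a)·exp(β Q(a)) with Z = Σ_{a'} π(a') exp(β Q(a'))). Then (i) Q(a) = (log Z)/β for every a with π(a) > 0, and (ii) if additionally Q(a') ≤ (log Z)/β for every a' with π(a') = 0, then π maximizes Σ_a π'(a) Q(a) over all probability distributions π' on A. -/
/-!
On the support of `π` the fixed-point equation cancels to `exp (β * Q a) = Z`, so `Q` is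
constant there, equal to `log Z / β`. If `Q` is at most this value off the support as well,
then `π` puts all its mass on maximizers of `Q`, and no distribution can do better.
-/

open Finset

lemma Real.eq_log_div_of_exp_mul_eq {β q Z : ℝ} (hβ : β ≠ 0) (h : Real.exp (β * q) = Z) :
    q = Real.log Z / β := by
  rw [← h, Real.log_exp, mul_div_cancel_left₀ q hβ]

section WeightedSums

variable {ι : Type*} {s : Finset ι} {w f : ι → ℝ} {c : ℝ}

lemma Finset.sum_mul_eq_of_eq_of_ne_zero (hw : ∑ i ∈ s, w i = 1)
    (hf : ∀ i ∈ s, w i ≠ 0 → f i = c) : ∑ i ∈ s, w i * f i = c := by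
  calc ∑ i ∈ s, w i * f i = ∑ i ∈ s, w i * c := by
        refine sum_congr rfl fun i hi => ?_
        by_cases hwi : w i = 0
        · simp [hwi]
        · rw [hf i hi hwi]
    _ = c := by rw [← sum_mul, hw, one_mul]

lemma Finset.sum_mul_le_of_le (hw₀ : ∀ i ∈ s, 0 ≤ w i) (hw : ∑ i ∈ s, w i = 1)
    (hf : ∀ i ∈ s, f i ≤ c) : ∑ i ∈ s, w i * f i ≤ c := by
  calc ∑ i ∈ s, w i * f i ≤ ∑ i ∈ s, w i * c :=
        sum_le_sum fun i hi => mul_le_mul_of_nonneg_left (hf i hi) (hw₀ i hi)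
    _ = c := by rw [← sum_mul, hw, one_mul]

end WeightedSums

theorem stmt8_general {A : Type*} [Fintype A]
    (π : A → ℝ) (hπnn : ∀ a, 0 ≤ π a) (hπsum : ∑ a, π a = 1)
    (Q : A → ℝ) (β : ℝ) (hβ : 0 < β)
    (Z : ℝ)
    (hfix : ∀ a, π a * Z = π a * Real.exp (β * Q a)) :
    (∀ a, 0 < π a → Q a = Real.log Z / β) ∧
      ((∀ a, π a = 0 → Q a ≤ Real.log Z / β) →
        ∀ π' : A → ℝ, (∀ a, 0 ≤ π' a) → (∑ a, π' a = 1) →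
          (∑ a, π' a * Q a) ≤ ∑ a, π a * Q a) := by
  have hsupp (a : A) (ha : 0 < π a) : Q a = Real.log Z / β :=
    Real.eq_log_div_of_exp_mul_eq hβ.ne' (mul_left_cancel₀ ha.ne' (hfix a)).symm
  refine ⟨hsupp, fun hoff π' hπ'nn hπ'sum => ?_⟩
  have hQ_le (a : A) : Q a ≤ Real.log Z / β := by
    rcases (hπnn a).eq_or_lt with h | h
    · exact hoff a h.symm
    · exact (hsupp a h).le
  have hvalue : ∑ a, π a * Q a = Real.log Z / β :=
    sum_mul_eq_of_eq_of_ne_zero hπsum fun a _ ha => hsupp a ((hπnn a).lt_of_ne' ha)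
  rw [hvalue]
  exact sum_mul_le_of_le (fun a _ => hπ'nn a) hπ'sum fun a _ => hQ_le a

/-- At a fixed point `π(a)·Z = π(a)·exp(β Q(a))` of the Boltzmann improvement operator:
(i) `Q(a) = (log Z)/β` on the support of `π`; (ii) if off-support actions have
`Q ≤ (log Z)/β`, then `π` maximizes the expected value `Σ_a π'(a) Q(a)` over all
probability distributions `π'` on `A`. -/
theorem stmt8 {A : Type*} [Fintype A]
    (π : A → ℝ) (hπnn : ∀ a, 0 ≤ π a) (hπsum : ∑ a, π a = 1)
    (Q : A → ℝ) (β : ℝ) (hβ : 0 < β)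
    (Z : ℝ) (hZ : Z = ∑ a', π a' * Real.exp (β * Q a'))
    (hfix : ∀ a, π a * Z = π a * Real.exp (β * Q a)) :
    (∀ a, 0 < π a → Q a = Real.log Z / β) ∧
      ((∀ a, π a = 0 → Q a ≤ Real.log Z / β) →
        ∀ π' : A → ℝ, (∀ a, 0 ≤ π' a) → (∑ a, π' a = 1) →
          (∑ a, π' a * Q a) ≤ ∑ a, π a * Q a) :=
  stmt8_general π hπnn hπsum Q β hβ Z hfix
end

section
/- Let Θ be a compact metric space, H a finite set, and p : Θ → Δ(H) a continuous map into probability distributions on H such that the range {p_θ : θ ∈ Θ} is convex (for all θ', θ'' ∈ Θ and α ∈ [0,1] there is θ with p_θ = α p_{θ'} + (1−α) p_{θ''}). Then for every Borel probability measure μ on Θ there exists θ* ∈ Θ with p_{θ*}(h) = ∫_Θ p_θ(h) dμ(θ) for all h ∈ H. -/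
open MeasureTheory

/-- Arbitrary mixtures of representable models are representable: if `θ ↦ p_θ` is a
continuous map from a compact metric space into probability vectors on a finite set `H`
with convex range, then for every Borel probability measure `μ` on `Θ` there is a pure
parameter `θ*` with `p_{θ*}(h) = ∫ p_θ(h) dμ(θ)` for all `h`. -/
theorem stmt11 {Θ : Type*} [MetricSpace Θ] [CompactSpace Θ]
    [MeasurableSpace Θ] [BorelSpace Θ]
    {H : Type*} [Fintype H]
    (p : Θ → H → ℝ) (hcont : Continuous p)
    (hnn : ∀ θ h, 0 ≤ p θ h) (hsum : ∀ θ, ∑ h, p θ h = 1)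
    (hconv : ∀ θ' θ'' : Θ, ∀ α : ℝ, α ∈ Set.Icc (0:ℝ) 1 →
      ∃ θ : Θ, ∀ h, p θ h = α * p θ' h + (1 - α) * p θ'' h)
    (μ : Measure Θ) [IsProbabilityMeasure μ] :
    ∃ θstar : Θ, ∀ h, p θstar h = ∫ θ, p θ h ∂μ := by
  have hconvS : Convex ℝ (Set.range p) := by
    rintro _ ⟨θ', rfl⟩ _ ⟨θ'', rfl⟩ a b ha hb hab
    obtain ⟨θ, hθ⟩ := hconv θ' θ'' a ⟨ha, by linarith⟩
    refine ⟨θ, funext fun h => ?_⟩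
    have hb' : b = 1 - a := by linarith
    simp [hθ h, hb', smul_eq_mul]
  have hcompact : IsCompact (Set.range p) := isCompact_range hcont
  have hint : Integrable p μ := hcont.integrable_of_hasCompactSupport (HasCompactSupport.of_compactSpace p)
  have hmem : ∫ θ, p θ ∂μ ∈ Set.range p :=
    hconvS.integral_mem hcompact.isClosed
      (Filter.Eventually.of_forall fun θ => Set.mem_range_self θ) hint
  obtain ⟨θstar, hθ⟩ := hmem
  refine ⟨θstar, fun h => ?_⟩
  have := congrFun hθ h
  rw [this]
  exact ((ContinuousLinearMap.proj (R := ℝ) (φ := fun _ : H => ℝ) h).integral_comp_comm hint).symm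
end
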